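/- arXiv:2005.01011 — 3 statements merged into one kernel-verified Lean document; each statement's English description precedes it below -/
import Mathlib

section
/- In the circular sweep process, the number of iterations needed to reduce the evader region to be bounded by a circle of radius at most r is N_n = ⌈ln((2πrV_T - nrV_s)/(2πR_0V_T - nrV_s)) / ln(1 + 2πV_T/(n(V_s+V_T)))⌉, provided V_s > 2πR_0V_T/(nr). -/
open Real

/-!
Subtracting the fixed point `F = n r V_s / (2π V_T)` of the affine recurrence turns it into the
geometric one `R_{i+1} - F = q (R_i - F)` with ratio `q = 1 + 2πV_T/(n(V_s+V_T)) > 1`. The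
supercriticality assumption says exactly `R_0 < F`, so `R_i = F - qⁱ (F - R_0)` decreases, and
`R_i ≤ r` holds iff `qⁱ ≥ (F - r)/(F - R_0)`, i.e. iff `i ≥ log((F - r)/(F - R_0)) / log q`.
Clearing the denominator `2π V_T` in that ratio gives the stated formula.
-/

theorem sub_eq_pow_mul_sub_of_succ_sub {α : Type*} [Ring α] {q F : α} {R : ℕ → α}
    (h : ∀ i, R (i + 1) - F = q * (R i - F)) (i : ℕ) : R i - F = q ^ i * (R 0 - F) := by
  induction i with
  | zero => rw [pow_zero, one_mul]
  | succ i ih => rw [h, ih, pow_succ', mul_assoc]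

theorem isLeast_le_pow_natCeil_log_div_log {q A : ℝ} (hq : 1 < q) (hA : 0 < A) :
    IsLeast {i : ℕ | A ≤ q ^ i} ⌈log A / log q⌉₊ := by
  have key : ∀ i : ℕ, A ≤ q ^ i ↔ log A / log q ≤ i := fun i => by
    rw [div_le_iff₀ (log_pos hq), ← log_pow, log_le_log_iff hA (pow_pos (by linarith) i)]
  exact ⟨(key _).2 (Nat.le_ceil _), fun i hi => Nat.ceil_le.2 ((key i).1 hi)⟩

theorem isLeast_le_of_sub_eq_pow_mul {q F r : ℝ} {R : ℕ → ℝ} (hq : 1 < q) (hR0 : R 0 < F)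
    (hr : r < F) (hR : ∀ i, R i - F = q ^ i * (R 0 - F)) :
    IsLeast {i : ℕ | R i ≤ r} ⌈log ((r - F) / (R 0 - F)) / log q⌉₊ := by
  have hset : {i : ℕ | R i ≤ r} = {i : ℕ | (r - F) / (R 0 - F) ≤ q ^ i} := by
    ext i
    rw [Set.mem_ofPred_eq, Set.mem_ofPred_eq, div_le_iff_of_neg (sub_neg.2 hR0), ← hR i,
      sub_le_sub_iff_right]
  rw [hset]
  exact isLeast_le_pow_natCeil_log_div_log hq
    (div_pos_of_neg_of_neg (sub_neg.2 hr) (sub_neg.2 hR0))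

theorem stmt_6_general (n : ℕ) (hn : 0 < n) (r Vs VT R0 : ℝ)
    (hr : 0 < r) (hVT : 0 < VT) (hR0r : r < R0)
    (hcrit : Vs > 2 * π * R0 * VT / (n * r))
    (R : ℕ → ℝ) (hR0 : R 0 = R0)
    (hrec : ∀ i, R (i + 1) =
      R i * (1 + 2 * π * VT / (n * (Vs + VT))) - r * Vs / (Vs + VT)) :
    IsLeast {i : ℕ | R i ≤ r}
      ⌈Real.log ((2 * π * r * VT - n * r * Vs) / (2 * π * R0 * VT - n * r * Vs)) /
        Real.log (1 + 2 * π * VT / (n * (Vs + VT)))⌉₊ := by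
  have hn' : (0 : ℝ) < n := Nat.cast_pos.2 hn
  have hπVT : 0 < 2 * π * VT := by positivity
  have hR0pos : 0 < R0 := hr.trans hR0r
  have hVs : 0 < Vs := lt_of_le_of_lt (by positivity) hcrit
  have hcrit' : 2 * π * R0 * VT < Vs * (n * r) := (div_lt_iff₀ (by positivity)).1 hcrit
  set F := n * r * Vs / (2 * π * VT)
  have hF : 2 * π * VT * F = n * r * Vs := mul_div_cancel₀ _ hπVT.ne'
  have hR0F : R0 < F := by rw [lt_div_iff₀ hπVT]; linarith
  have hq : 1 < 1 + 2 * π * VT / (n * (Vs + VT)) := lt_add_of_pos_right 1 (by positivity)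
  have hrec' : ∀ i, R (i + 1) - F = (1 + 2 * π * VT / (n * (Vs + VT))) * (R i - F) := by
    intro i
    rw [hrec]
    field_simp
    linear_combination hF
  have hfrac : (2 * π * r * VT - n * r * Vs) / (2 * π * R0 * VT - n * r * Vs)
      = (r - F) / (R0 - F) := by
    rw [← mul_div_mul_left (r - F) (R0 - F) hπVT.ne']
    congr 1 <;> linear_combination hF
  rw [hfrac, ← hR0]
  exact isLeast_le_of_sub_eq_pow_mul hq (hR0 ▸ hR0F) (hR0r.trans hR0F)
    (sub_eq_pow_mul_sub_of_succ_sub hrec')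

/-- Circular sweep process: under the supercriticality assumption
`V_s > 2πR₀V_T/(nr)`, the number of iterations needed for the bounding radius
(evolving by `R_{i+1} = R_i(1 + 2πV_T/(n(V_s+V_T))) - rV_s/(V_s+V_T)`) to drop
to at most `r` is
`N_n = ⌈ln((2πrV_T - nrV_s)/(2πR₀V_T - nrV_s)) / ln(1 + 2πV_T/(n(V_s+V_T)))⌉`. -/
theorem stmt_6 (n : ℕ) (hn : 0 < n) (r Vs VT R0 : ℝ)
    (hr : 0 < r) (hVs : 0 < Vs) (hVT : 0 < VT) (hR0r : r < R0)
    (hcrit : Vs > 2 * π * R0 * VT / (n * r))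
    (R : ℕ → ℝ) (hR0 : R 0 = R0)
    (hrec : ∀ i, R (i + 1) =
      R i * (1 + 2 * π * VT / (n * (Vs + VT))) - r * Vs / (Vs + VT)) :
    IsLeast {i : ℕ | R i ≤ r}
      ⌈Real.log ((2 * π * r * VT - n * r * Vs) / (2 * π * R0 * VT - n * r * Vs)) /
        Real.log (1 + 2 * π * VT / (n * (Vs + VT)))⌉₊ :=
  stmt_6_general n hn r Vs VT R0 hr hVT hR0r hcrit R hR0 hrec
end

section
/- The spiral critical velocity, defined as the V_s solving (R_0 - r)(e^{2πV_T/(n√(V_s²-V_T²))} - 1) = 2rV_s/(V_s+V_T), exists and is unique in (V_T, ∞) when R_0 > r > 0 and V_T > 0. -/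
/-!
Dividing by `n` inside the exponent, the left side is `K (exp (c / √(V_s² - V_T²)) - 1)` with
`K = R₀ - r > 0` and `c = 2πV_T/n > 0`: it decreases strictly from `+∞` (as `V_s → V_T⁺`)
to `0` (as `V_s → ∞`). The right side `2rV_s/(V_s + V_T)` increases strictly and stays in
`(r, 2r)` on `(V_T, ∞)`. So the left side exceeds the right one near `V_T` and falls below it
for large `V_s`; the intermediate value theorem gives a crossing, and opposite monotonicity
makes it unique.
-/

open Real Filter Topology Set

theorem IsPreconnected.existsUnique_eq_of_strictAntiOn_of_strictMonoOn {X α : Type*}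
    [LinearOrder X] [TopologicalSpace X] [LinearOrder α] [TopologicalSpace α]
    [OrderClosedTopology α] {s : Set X} (hs : IsPreconnected s) {f g : X → α}
    (hf : StrictAntiOn f s) (hg : StrictMonoOn g s) (hfc : ContinuousOn f s)
    (hgc : ContinuousOn g s) {a b : X} (ha : a ∈ s) (hb : b ∈ s) (hfga : g a < f a)
    (hfgb : f b < g b) : ∃! x, x ∈ s ∧ f x = g x := by
  obtain ⟨x, hx, hfgx⟩ := hs.intermediate_value₂ hb ha hfc hgc hfgb.le hfga.le
  refine ⟨x, ⟨hx, hfgx⟩, fun y ⟨hy, hfgy⟩ => ?_⟩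
  by_contra hne
  rcases lt_or_gt_of_ne hne with hyx | hxy
  · exact (hf hy hx hyx).not_ge (hfgy ▸ hfgx ▸ (hg hy hx hyx).le)
  · exact (hf hx hy hxy).not_ge (hfgx ▸ hfgy ▸ (hg hx hy hxy).le)

section SqrtSqSubSq

variable {b c : ℝ}

theorem sqrt_sq_sub_sq_pos (hb : 0 ≤ b) {x : ℝ} (hx : b < x) : 0 < √(x ^ 2 - b ^ 2) :=
  sqrt_pos.2 (by nlinarith)

theorem strictAntiOn_div_sqrt_sq_sub_sq (hb : 0 ≤ b) (hc : 0 < c) :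
    StrictAntiOn (fun x ↦ c / √(x ^ 2 - b ^ 2)) (Ioi b) := fun x hx y hy hxy ↦
  div_lt_div_of_pos_left hc (sqrt_sq_sub_sq_pos hb hx)
    (sqrt_lt_sqrt (by nlinarith [hx.out]) (by nlinarith [hx.out]))

theorem continuousOn_div_sqrt_sq_sub_sq (hb : 0 ≤ b) :
    ContinuousOn (fun x ↦ c / √(x ^ 2 - b ^ 2)) (Ioi b) :=
  continuousOn_const.div (by fun_prop) fun _ hx ↦ (sqrt_sq_sub_sq_pos hb hx).ne'

theorem tendsto_div_sqrt_sq_sub_sq_nhdsGT (hb : 0 ≤ b) (hc : 0 < c) :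
    Tendsto (fun x ↦ c / √(x ^ 2 - b ^ 2)) (𝓝[>] b) atTop := by
  have hsqrt : Tendsto (fun x ↦ √(x ^ 2 - b ^ 2)) (𝓝[>] b) (𝓝[>] 0) := by
    refine tendsto_nhdsWithin_of_tendsto_nhds_of_eventually_within _ ?_ ?_
    · have : Continuous fun x : ℝ ↦ √(x ^ 2 - b ^ 2) := by fun_prop
      simpa using (this.tendsto b).mono_left nhdsWithin_le_nhds
    · filter_upwards [self_mem_nhdsWithin] with x hx using sqrt_sq_sub_sq_pos hb hx
  simpa only [div_eq_mul_inv, Pi.inv_apply] using hsqrt.inv_tendsto_nhdsGT_zero.const_mul_atTop hc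

theorem tendsto_div_sqrt_sq_sub_sq_atTop :
    Tendsto (fun x ↦ c / √(x ^ 2 - b ^ 2)) atTop (𝓝 0) := by
  refine tendsto_const_nhds.div_atTop (tendsto_sqrt_atTop.comp ?_)
  exact tendsto_atTop_add_const_right _ _ (tendsto_pow_atTop two_ne_zero)

end SqrtSqSubSq

/-- With `K = R₀ - r` and `c = 2πV_T/n`, the evader spread during one spiral traversal. -/
noncomputable def spiralSpread (K c b x : ℝ) : ℝ := K * (exp (c / √(x ^ 2 - b ^ 2)) - 1)

noncomputable def spiralPenetration (r b x : ℝ) : ℝ := 2 * r * x / (x + b)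

section Spiral

variable {K c b r x : ℝ}

theorem strictAntiOn_spiralSpread (hK : 0 < K) (hb : 0 ≤ b) (hc : 0 < c) :
    StrictAntiOn (spiralSpread K c b) (Ioi b) := fun _ hx _ hy hxy ↦
  mul_lt_mul_of_pos_left
    (sub_lt_sub_right (exp_lt_exp.2 (strictAntiOn_div_sqrt_sq_sub_sq hb hc hx hy hxy)) 1) hK

theorem continuousOn_spiralSpread (hb : 0 ≤ b) : ContinuousOn (spiralSpread K c b) (Ioi b) :=
  continuousOn_const.mul ((continuousOn_div_sqrt_sq_sub_sq hb).rexp.sub continuousOn_const)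

theorem tendsto_spiralSpread_nhdsGT (hK : 0 < K) (hb : 0 ≤ b) (hc : 0 < c) :
    Tendsto (spiralSpread K c b) (𝓝[>] b) atTop :=
  (tendsto_atTop_add_const_right _ (-1)
    (tendsto_exp_atTop.comp (tendsto_div_sqrt_sq_sub_sq_nhdsGT hb hc))).const_mul_atTop hK

theorem tendsto_spiralSpread_atTop : Tendsto (spiralSpread K c b) atTop (𝓝 0) := by
  rw [show (0 : ℝ) = K * (exp 0 - 1) by simp]
  exact (((continuous_exp.tendsto 0).comp tendsto_div_sqrt_sq_sub_sq_atTop).sub_const 1).const_mul K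

theorem strictMonoOn_spiralPenetration (hr : 0 < r) (hb : 0 < b) :
    StrictMonoOn (spiralPenetration r b) (Ioi (-b)) := by
  intro x hx y hy hxy
  have hx : 0 < x + b := neg_lt_iff_pos_add.1 hx
  have hy : 0 < y + b := neg_lt_iff_pos_add.1 hy
  rw [spiralPenetration, spiralPenetration, div_lt_div_iff₀ hx hy]
  nlinarith [mul_pos (mul_pos hr hb) (sub_pos.2 hxy)]

theorem continuousOn_spiralPenetration : ContinuousOn (spiralPenetration r b) (Ioi (-b)) :=
  (continuousOn_const.mul continuousOn_id).div (continuousOn_id.add continuousOn_const)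
    fun _ hx ↦ (neg_lt_iff_pos_add.1 hx).ne'

theorem lt_spiralPenetration (hr : 0 < r) (hb : 0 ≤ b) (hx : b < x) :
    r < spiralPenetration r b x := by
  rw [spiralPenetration, lt_div_iff₀ (by linarith)]
  nlinarith

theorem spiralPenetration_lt (hr : 0 < r) (hb : 0 < b) (hx : -b < x) :
    spiralPenetration r b x < 2 * r := by
  rw [spiralPenetration, div_lt_iff₀ (neg_lt_iff_pos_add.1 hx)]
  nlinarith

end Spiral

/-- The spiral critical velocity exists and is unique: there is exactly one
`V_s > V_T` solving
`(R₀ - r)(e^{2πV_T/(n√(V_s²-V_T²))} - 1) = 2rV_s/(V_s + V_T)`. -/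
theorem stmt_13 (n : ℕ) (hn : 0 < n) (VT R0 r : ℝ)
    (hVT : 0 < VT) (hr : 0 < r) (hR0 : r < R0) :
    ∃! Vs : ℝ, Vs > VT ∧
      (R0 - r) *
          (Real.exp (2 * π * VT / (n * Real.sqrt (Vs ^ 2 - VT ^ 2))) - 1) =
        2 * r * Vs / (Vs + VT) := by
  have hK : 0 < R0 - r := sub_pos.2 hR0
  have hc : 0 < 2 * π * VT / n := div_pos (by positivity) (Nat.cast_pos.2 hn)
  obtain ⟨a, ha, haVT⟩ := (((tendsto_spiralSpread_nhdsGT hK hVT.le hc).eventually_gt_atTop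
    (2 * r)).and self_mem_nhdsWithin).exists
  obtain ⟨b, hb, hbVT⟩ :=
    ((tendsto_spiralSpread_atTop.eventually_lt_const hr).and (eventually_gt_atTop VT)).exists
  have hIoi : Ioi VT ⊆ Ioi (-VT) := Ioi_subset_Ioi (by linarith)
  have key := isPreconnected_Ioi.existsUnique_eq_of_strictAntiOn_of_strictMonoOn
    (strictAntiOn_spiralSpread hK hVT.le hc) ((strictMonoOn_spiralPenetration hr hVT).mono hIoi)
    (continuousOn_spiralSpread hVT.le) (continuousOn_spiralPenetration.mono hIoi) haVT hbVT
    ((spiralPenetration_lt hr hVT (hIoi haVT)).trans ha)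
    (hb.trans (lt_spiralPenetration hr hVT.le hbVT))
  simpa only [spiralSpread, spiralPenetration, div_mul_eq_div_div, mem_Ioi, gt_iff_lt] using key
end

section
/- In the spiral sweep process with V_s above the spiral critical velocity, the number of iterations to reduce the evader region to a disk of radius at most 2r is N_n = ⌈ln(r(3 - E)/(R_0(1-E) + r(1+E)))/ln((V_T + V_s·E)/(V_s+V_T))⌉ where E = e^{2πV_T/(n√(V_s²-V_T²))}. -/
/-!
Shifting by `r`, the radii follow an affine recursion `x (i+1) = c x i + d` with multiplier
`c > 1`, whose fixed point `p = 2r/(E-1)` is repelling. Hence `p - x i = c^i (p - x 0)`, and since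
supercriticality puts `x 0 = R₀ - r` below `p`, the gap to the fixed point grows geometrically:
`x i ≤ r` first happens at the least `i` with `c^i ≥ (p - r)/(p - x 0)`, i.e. at the ceiling
of a ratio of logarithms. The expression in the theorem is this ratio with `p` substituted.
-/

open Real

theorem isLeast_le_pow_nat_ceil_log_div_log {c A : ℝ} (hc : 1 < c) (hA : 0 < A) :
    IsLeast {i : ℕ | A ≤ c ^ i} ⌈log A / log c⌉₊ := by
  have hlogc : 0 < log c := log_pos hc
  have hle_pow_iff (i : ℕ) : A ≤ c ^ i ↔ log A / log c ≤ i := by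
    rw [div_le_iff₀ hlogc, ← log_pow, log_le_log_iff hA (pow_pos (by linarith) i)]
  refine ⟨(hle_pow_iff _).2 (Nat.le_ceil _), fun i hi => ?_⟩
  exact Nat.ceil_le.2 ((hle_pow_iff i).1 hi)

theorem sub_fixedPoint_eq_pow_mul {K : Type*} [CommRing K] {x : ℕ → K} {c d p : K}
    (hx : ∀ i, x (i + 1) = c * x i + d) (hp : c * p + d = p)
    (i : ℕ) : x i - p = c ^ i * (x 0 - p) := by
  induction i with
  | zero => simp
  | succ i ih => rw [hx, pow_succ, mul_right_comm, ← ih]; linear_combination hp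

theorem isLeast_affine_hittingTime {x : ℕ → ℝ} {c d p t : ℝ} (hc : 1 < c)
    (hx : ∀ i, x (i + 1) = c * x i + d) (hp : c * p + d = p) (hx0 : x 0 < p) (ht : t < p) :
    IsLeast {i : ℕ | x i ≤ t} ⌈log ((p - t) / (p - x 0)) / log c⌉₊ := by
  have hgap : 0 < p - x 0 := sub_pos.2 hx0
  have hset : {i : ℕ | x i ≤ t} = {i : ℕ | (p - t) / (p - x 0) ≤ c ^ i} := by
    ext i
    have hclosed := sub_fixedPoint_eq_pow_mul hx hp i
    simp only [Set.mem_ofPred_eq, div_le_iff₀ hgap]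
    constructor <;> intro h <;> linarith
  rw [hset]
  exact isLeast_le_pow_nat_ceil_log_div_log hc (div_pos (sub_pos.2 ht) hgap)

/-- Spiral sweep process: with `E = e^{2πV_T/(n√(V_s²-V_T²))}` and `V_s` above the
spiral critical velocity (so that the spread during one sweep satisfies
`(R₀ - r)(E - 1) < 2r`, i.e. `R̃₀` lies below the repelling fixed point), the number
of iterations needed to reduce the evader region to a disk of radius at most `2r` is
`N_n = ⌈ln(r(3-E)/(R₀(1-E)+r(1+E))) / ln((V_T+V_s E)/(V_s+V_T))⌉`. -/
theorem stmt_16 (n : ℕ) (hn : 0 < n) (Vs VT R0 r : ℝ)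
    (hVT : 0 < VT) (hVs : VT < Vs) (hr : 0 < r) (hR0 : 2 * r < R0)
    (E : ℝ) (hE : E = Real.exp (2 * π * VT / (n * Real.sqrt (Vs ^ 2 - VT ^ 2))))
    (hcrit : (R0 - r) * (E - 1) < 2 * r * Vs / (Vs + VT))
    (R : ℕ → ℝ) (hR0' : R 0 = R0)
    (hrec : ∀ i, R (i + 1) - r =
      (R i - r) * ((VT + Vs * E) / (Vs + VT)) - 2 * r * Vs / (Vs + VT)) :
    IsLeast {i : ℕ | R i ≤ 2 * r}
      ⌈Real.log (r * (3 - E) / (R0 * (1 - E) + r * (1 + E))) /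
        Real.log ((VT + Vs * E) / (Vs + VT))⌉₊ := by
  have hsum : 0 < Vs + VT := by linarith
  have hE1 : 1 < E := by
    have hsqrt : 0 < √(Vs ^ 2 - VT ^ 2) := sqrt_pos.2 (by nlinarith)
    rw [hE, one_lt_exp_iff]
    exact div_pos (by positivity) (mul_pos (Nat.cast_pos.2 hn) hsqrt)
  have hc : 1 < (VT + Vs * E) / (Vs + VT) := by
    rw [one_lt_div hsum]; nlinarith
  set p := 2 * r / (E - 1) with hp_def
  have hE1' : E - 1 ≠ 0 := by linarith
  have hp : (VT + Vs * E) / (Vs + VT) * p + -(2 * r * Vs / (Vs + VT)) = p := by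
    rw [hp_def]; field_simp; ring
  have hx0 : R0 - r < p := by
    rw [hp_def, lt_div_iff₀ (by linarith)]
    calc (R0 - r) * (E - 1) < 2 * r * Vs / (Vs + VT) := hcrit
      _ < 2 * r := by rw [div_lt_iff₀ hsum]; nlinarith
  have hlog_arg : r * (3 - E) / (R0 * (1 - E) + r * (1 + E)) = (p - r) / (p - (R0 - r)) := by
    rw [hp_def, div_sub' hE1', div_sub' hE1', div_div_div_cancel_right₀ hE1']
    ring_nf
  have hset : {i : ℕ | R i ≤ 2 * r} = {i : ℕ | R i - r ≤ r} := by
    ext i; simp only [Set.mem_ofPred_eq]; constructor <;> intro h <;> linarith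
  rw [hset, hlog_arg, ← hR0']
  refine isLeast_affine_hittingTime (x := fun i => R i - r) hc (fun i => ?_) hp ?_ (by linarith)
  · rw [hrec]; ring
  · rwa [hR0']
end
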